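/- Let g be the morphism g(0) = 011010011011001101001, g(1) = 100101100110110010110. Define A_0 = 0110110 and A_{n+1} = (011010)^{-1} g(A_n) (removal of the prefix 011010, which is always a prefix of g(A_n)). Then for every n ≥ 0, A_n is a prefix of A_{n+1}. -/

import Mathlib

def g (w : List Bool) : List Bool :=
  w.flatMap (fun b => if b then [true, false, false, true, false, true, true, false, false, true, true, false, true, true, false, false, true, false, true, true, false] else [false, true, true, false, true, false, false, true, true, false, true, true, false, false, true, true, false, true, false, false, true])

def A : ℕ → List Bool
  | 0 => [false, true, true, false, true, true, false]
  | n + 1 => (g (A n)).drop 6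

theorem List.IsPrefix.g {u v : List Bool} (h : u <+: v) : g u <+: g v :=
  h.flatMap _

theorem A_isPrefix_A_succ (n : ℕ) : A n <+: A (n + 1) := by
  induction n with
  | zero => decide
  | succ n ih => exact ih.g.drop 6

theorem A_zero_isPrefix (n : ℕ) : A 0 <+: A n := by
  induction n with
  | zero => exact List.prefix_refl _
  | succ n ih => exact ih.trans (A_isPrefix_A_succ n)

theorem stmt16 : ∀ n : ℕ, [false, true, true, false, true, false] <+: g (A n) ∧ A n <+: A (n + 1) := by
  intro n
  have hA0 : [false, true, true, false, true, false] <+: g (A 0) := by decide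
  exact ⟨hA0.trans (A_zero_isPrefix n).g, A_isPrefix_A_succ n⟩
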